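/- If g is a supermodular set function on a finite set V and m_g is the modular function with weights w_j = -min_{A ⊆ V} (g(A ∪ {j}) - g(A)), then g + m_g is supermodular and increasing (monotone non-decreasing). -/
import Mathlib


open Finset

def Submodular {V : Type*} [DecidableEq V] (l : Finset V → ℝ) : Prop :=
  ∀ ⦃B A : Finset V⦄, B ⊆ A → ∀ x ∉ A,
    l (insert x A) - l A ≤ l (insert x B) - l B

def Supermodular {V : Type*} [DecidableEq V] (g : Finset V → ℝ) : Prop :=
  ∀ ⦃B A : Finset V⦄, B ⊆ A → ∀ x ∉ A,
    g (insert x B) - g B ≤ g (insert x A) - g A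

theorem stmt2 {V : Type*} [Fintype V] [DecidableEq V] (g : Finset V → ℝ)
    (hg : Supermodular g) (w : V → ℝ)
    (hw : ∀ j : V, w j =
      - (Finset.univ : Finset (Finset V)).inf' Finset.univ_nonempty
          (fun A => g (insert j A) - g A)) :
    Supermodular (fun A : Finset V => g A + ∑ j ∈ A, w j) ∧
    ∀ (A : Finset V) (x : V), x ∉ A →
      g A + ∑ j ∈ A, w j ≤ g (insert x A) + ∑ j ∈ insert x A, w j := by
  constructor
  · intro B A hBA x hxA
    have hxB : x ∉ B := fun h => hxA (hBA h)
    have h1 := hg hBA x hxA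
    simp only []
    rw [Finset.sum_insert hxA, Finset.sum_insert hxB]
    linarith
  · intro A x hxA
    rw [Finset.sum_insert hxA]
    have h1 : (Finset.univ : Finset (Finset V)).inf' Finset.univ_nonempty
        (fun A => g (insert x A) - g A) ≤ g (insert x A) - g A :=
      Finset.inf'_le _ (Finset.mem_univ A)
    have h2 := hw x
    linarith
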